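/- Let G : ℝ^p → ℝ be differentiable with L₀-Lipschitz gradient, f : ℝ^p → ℝ^n C¹ with ‖J_θ f(θ)‖ ≤ M everywhere, and α, β > 0 with 4α²βM²L₀ < 1. Define θ(y) = θ₀ − 2αJ_θf(θ₀)ᵀ(f(θ₀) − y), H(y) = G(θ(y)), ỹ = f(θ₀), and ŷ = ỹ − β∇H(ỹ). Then G(θ(ŷ)) ≤ G(θ(ỹ)) = G(θ₀), with equality iff ∇H(ỹ) = 0. -/

import Mathlib

/-! The update of the pseudo label only moves `θ` along the affine map `y ↦ θ₀ + S (y - ỹ)` with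
`S = 2α J_θf(θ₀)ᵀ`, so `∇H(ỹ) = Sᵀ ∇G(θ₀)` and `θ(ŷ) = θ₀ - β S Sᵀ ∇G(θ₀)` is a preconditioned
gradient step for `G`. The descent lemma for an `L₀`-smooth `G` bounds the decrease by
`β (1 - L₀ β ‖S‖² / 2) ‖∇H(ỹ)‖²`, and `‖S‖ ≤ 2αM` makes the coefficient larger than `β / 2`. -/

open InnerProductSpace ContinuousLinearMap

section

variable {E F : Type*} [NormedAddCommGroup E] [InnerProductSpace ℝ E] [CompleteSpace E]
  [NormedAddCommGroup F] [InnerProductSpace ℝ F] [CompleteSpace F]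

theorem HasGradientAt.comp_hasFDerivAt {G : E → ℝ} {θ : F → E} {g : E} {S : F →L[ℝ] E} {y : F}
    (hG : HasGradientAt G g (θ y)) (hθ : HasFDerivAt θ S y) :
    HasGradientAt (fun y => G (θ y)) (adjoint S g) y := by
  have hdual : toDual ℝ F (adjoint S g) = (toDual ℝ E g).comp S := by
    ext w
    simp [adjoint_inner_left]
  rw [hasGradientAt_iff_hasFDerivAt, hdual]
  exact hG.hasFDerivAt.comp y hθ

theorem gradient_comp_add_sub {G : E → ℝ} {c : E} (hG : DifferentiableAt ℝ G c)
    (S : F →L[ℝ] E) (y₀ : F) :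
    gradient (fun y => G (c + S (y - y₀))) y₀ = adjoint S (gradient G c) := by
  have hS : HasFDerivAt (fun y => c + S (y - y₀)) S y₀ := by
    simpa using (S.hasFDerivAt.comp y₀ ((hasFDerivAt_id y₀).sub_const y₀)).const_add c
  have hG' : HasGradientAt G (gradient G c) (c + S (y₀ - y₀)) := by
    simpa using hG.hasGradientAt
  exact (hG'.comp_hasFDerivAt (θ := fun y => c + S (y - y₀)) hS).gradient

theorem hasDerivAt_apply_add_smul {G : E → ℝ} (hG : Differentiable ℝ G) (x v : E) (t : ℝ) :
    HasDerivAt (fun t : ℝ => G (x + t • v)) (inner ℝ (gradient G (x + t • v)) v) t := by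
  have hline : HasDerivAt (fun t : ℝ => x + t • v) v t := by
    simpa using ((hasDerivAt_id t).smul_const v).const_add x
  simpa [Function.comp_def] using (hG _).hasGradientAt.hasFDerivAt.comp_hasDerivAt t hline

theorem apply_add_le_of_lipschitz_gradient {G : E → ℝ} {L : ℝ} (hG : Differentiable ℝ G)
    (hLip : ∀ a b, ‖gradient G a - gradient G b‖ ≤ L * ‖a - b‖) (x v : E) :
    G (x + v) ≤ G x + inner ℝ (gradient G x) v + L / 2 * ‖v‖ ^ 2 := by
  set g := gradient G x
  -- `φ` is antitone on `[0, ∞)` because `∇G` moves by at most `L t ‖v‖` along the segment.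
  set φ : ℝ → ℝ := fun t => G (x + t • v) - t * inner ℝ g v - L / 2 * t ^ 2 * ‖v‖ ^ 2
  have hφ : ∀ t, HasDerivAt φ
      (inner ℝ (gradient G (x + t • v)) v - inner ℝ g v - L * t * ‖v‖ ^ 2) t := by
    intro t
    refine (((hasDerivAt_apply_add_smul hG x v t).sub
      ((hasDerivAt_id t).mul_const (inner ℝ g v))).sub
      (((hasDerivAt_pow 2 t).const_mul (L / 2)).mul_const (‖v‖ ^ 2))).congr_deriv ?_
    ring
  have hφ_nonpos : ∀ t, 0 ≤ t →
      inner ℝ (gradient G (x + t • v)) v - inner ℝ g v - L * t * ‖v‖ ^ 2 ≤ 0 := by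
    intro t ht
    have hmove : ‖gradient G (x + t • v) - g‖ ≤ L * (t * ‖v‖) := by
      simpa [norm_smul, abs_of_nonneg ht] using hLip (x + t • v) x
    suffices inner ℝ (gradient G (x + t • v)) v - inner ℝ g v ≤ L * t * ‖v‖ ^ 2 by linarith
    calc inner ℝ (gradient G (x + t • v)) v - inner ℝ g v
        = inner ℝ (gradient G (x + t • v) - g) v := (inner_sub_left _ _ _).symm
      _ ≤ ‖gradient G (x + t • v) - g‖ * ‖v‖ := real_inner_le_norm _ _
      _ ≤ L * (t * ‖v‖) * ‖v‖ := mul_le_mul_of_nonneg_right hmove (norm_nonneg v)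
      _ = L * t * ‖v‖ ^ 2 := by ring
  have hanti : AntitoneOn φ (Set.Ici 0) :=
    antitoneOn_of_hasDerivWithinAt_nonpos (convex_Ici 0)
      (fun t _ => (hφ t).continuousAt.continuousWithinAt) (fun t _ => (hφ t).hasDerivWithinAt)
      (fun t ht => hφ_nonpos t (by rw [interior_Ici] at ht; exact le_of_lt ht))
  have h10 : φ 1 ≤ φ 0 := hanti Set.self_mem_Ici (Set.mem_Ici.2 zero_le_one) zero_le_one
  simp only [φ, one_smul, zero_smul, add_zero, one_mul, zero_mul, one_pow] at h10
  linarith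

theorem apply_sub_smul_adjoint_gradient_le {G : E → ℝ} {L β : ℝ} (hG : Differentiable ℝ G)
    (hLip : ∀ a b, ‖gradient G a - gradient G b‖ ≤ L * ‖a - b‖) (hL : 0 ≤ L) (hβ : 0 ≤ β)
    (S : F →L[ℝ] E) (x : E) :
    G (x - β • S (adjoint S (gradient G x))) ≤
      G x - β * (1 - L * β * ‖S‖ ^ 2 / 2) * ‖adjoint S (gradient G x)‖ ^ 2 := by
  set w := adjoint S (gradient G x)
  have hinner : inner ℝ (gradient G x) (-(β • S w)) = -(β * ‖w‖ ^ 2) := by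
    rw [inner_neg_right, real_inner_smul_right, ← adjoint_inner_left,
      real_inner_self_eq_norm_sq]
  have hstep : ‖β • S w‖ ≤ β * (‖S‖ * ‖w‖) := by
    rw [norm_smul, Real.norm_of_nonneg hβ]
    exact mul_le_mul_of_nonneg_left (S.le_opNorm w) hβ
  have hstep_sq : ‖β • S w‖ ^ 2 ≤ (β * (‖S‖ * ‖w‖)) ^ 2 :=
    pow_le_pow_left₀ (norm_nonneg _) hstep 2
  have hdesc := apply_add_le_of_lipschitz_gradient hG hLip x (-(β • S w))
  rw [← sub_eq_add_neg, hinner, norm_neg] at hdesc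
  nlinarith [mul_le_mul_of_nonneg_left hstep_sq hL]

end

theorem max_zero_mul_mul_sq_lt_one {L β s c : ℝ} (hβ : 0 ≤ β) (hs : 0 ≤ s) (hsc : s ≤ c)
    (h : c ^ 2 * β * L < 1) : max L 0 * β * s ^ 2 < 1 := by
  have hs_sq : s ^ 2 ≤ c ^ 2 := pow_le_pow_left₀ hs hsc 2
  calc max L 0 * β * s ^ 2 ≤ max L 0 * β * c ^ 2 :=
        mul_le_mul_of_nonneg_left hs_sq (by positivity)
    _ = max (c ^ 2 * β * L) (c ^ 2 * β * 0) := by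
        rw [← mul_max_of_nonneg _ _ (by positivity)]
        ring
    _ < 1 := max_lt h (by rw [mul_zero]; exact one_pos)

theorem stmt_16_general (p n : ℕ) (G : EuclideanSpace ℝ (Fin p) → ℝ)
    (f : EuclideanSpace ℝ (Fin p) → EuclideanSpace ℝ (Fin n)) (L₀ M α β : ℝ)
    (hG : Differentiable ℝ G)
    (hGLip : ∀ a b, ‖gradient G a - gradient G b‖ ≤ L₀ * ‖a - b‖)
    (hM : ∀ θ', ‖fderiv ℝ f θ'‖ ≤ M)
    (hα : 0 < α) (hβ : 0 < β) (hαβ : 4 * α ^ 2 * β * M ^ 2 * L₀ < 1)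
    (θ₀ : EuclideanSpace ℝ (Fin p))
    (θ : EuclideanSpace ℝ (Fin n) → EuclideanSpace ℝ (Fin p))
    (hθ : θ = fun y => θ₀ - (2 * α) • (ContinuousLinearMap.adjoint (fderiv ℝ f θ₀)) (f θ₀ - y))
    (H : EuclideanSpace ℝ (Fin n) → ℝ) (hH : H = fun y => G (θ y))
    (ytil yhat : EuclideanSpace ℝ (Fin n)) (hytil : ytil = f θ₀)
    (hyhat : yhat = ytil - β • gradient H ytil) :
    G (θ yhat) ≤ G (θ ytil) ∧ G (θ ytil) = G θ₀ ∧
      (G (θ yhat) = G θ₀ ↔ gradient H ytil = 0) := by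
  set S := (2 * α) • adjoint (fderiv ℝ f θ₀)
  have hθS : θ = fun y => θ₀ + S (y - ytil) := by
    subst hθ hytil
    funext y
    simp [S, ← smul_neg, sub_eq_add_neg]
  have hθ_ytil : θ ytil = θ₀ := by simp [hθS]
  have hgradH : gradient H ytil = adjoint S (gradient G θ₀) := by
    rw [hH, hθS]
    exact gradient_comp_add_sub (hG θ₀) S ytil
  have hθ_yhat : θ yhat = θ₀ - β • S (adjoint S (gradient G θ₀)) := by
    simp [hθS, hyhat, hgradH, sub_eq_add_neg]
  have hS : ‖S‖ ≤ 2 * α * M := by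
    rw [norm_smul, LinearIsometryEquiv.norm_map, Real.norm_of_nonneg (by positivity)]
    exact mul_le_mul_of_nonneg_left (hM θ₀) (by positivity)
  -- A negative `L₀` is replaced by `0`, which keeps the gradient bound and the step-size condition.
  set L := max L₀ 0
  have hLip : ∀ a b, ‖gradient G a - gradient G b‖ ≤ L * ‖a - b‖ := fun a b =>
    (hGLip a b).trans (mul_le_mul_of_nonneg_right (le_max_left _ _) (norm_nonneg _))
  have hstep_size : L * β * ‖S‖ ^ 2 < 1 :=
    max_zero_mul_mul_sq_lt_one hβ.le (norm_nonneg S) hS (by linarith)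
  have hdecrease := apply_sub_smul_adjoint_gradient_le hG hLip (le_max_right _ _) hβ.le S θ₀
  rw [← hθ_yhat, ← hgradH] at hdecrease
  have hcoef : 0 < β * (1 - L * β * ‖S‖ ^ 2 / 2) := mul_pos hβ (by linarith)
  refine ⟨?_, by rw [hθ_ytil], fun h => ?_, fun h => ?_⟩
  · rw [hθ_ytil]
    nlinarith [sq_nonneg ‖gradient H ytil‖]
  · rw [← norm_eq_zero, ← sq_eq_zero_iff]
    nlinarith [sq_nonneg ‖gradient H ytil‖]
  · rw [hyhat, h, smul_zero, sub_zero, hθ_ytil]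

/-- Single-example version of Theorem 1: one meta-gradient update
of the pseudo label decreases the validation loss G when 4α²βM²L₀ < 1, with
equality iff ∇H(ỹ) = 0. Here θ(y) = θ₀ − 2αJ_θf(θ₀)ᵀ(f(θ₀) − y), H = G ∘ θ,
ỹ = f(θ₀), ŷ = ỹ − β∇H(ỹ). -/
theorem stmt_16 (p n : ℕ) (G : EuclideanSpace ℝ (Fin p) → ℝ)
    (f : EuclideanSpace ℝ (Fin p) → EuclideanSpace ℝ (Fin n)) (L₀ M α β : ℝ)
    (hG : Differentiable ℝ G)
    (hGLip : ∀ a b, ‖gradient G a - gradient G b‖ ≤ L₀ * ‖a - b‖)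
    (hf : ContDiff ℝ 1 f) (hM : ∀ θ', ‖fderiv ℝ f θ'‖ ≤ M)
    (hα : 0 < α) (hβ : 0 < β) (hαβ : 4 * α ^ 2 * β * M ^ 2 * L₀ < 1)
    (θ₀ : EuclideanSpace ℝ (Fin p))
    (θ : EuclideanSpace ℝ (Fin n) → EuclideanSpace ℝ (Fin p))
    (hθ : θ = fun y => θ₀ - (2 * α) • (ContinuousLinearMap.adjoint (fderiv ℝ f θ₀)) (f θ₀ - y))
    (H : EuclideanSpace ℝ (Fin n) → ℝ) (hH : H = fun y => G (θ y))
    (ytil yhat : EuclideanSpace ℝ (Fin n)) (hytil : ytil = f θ₀)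
    (hyhat : yhat = ytil - β • gradient H ytil) :
    G (θ yhat) ≤ G (θ ytil) ∧ G (θ ytil) = G θ₀ ∧
      (G (θ yhat) = G θ₀ ↔ gradient H ytil = 0) :=
  stmt_16_general p n G f L₀ M α β hG hGLip hM hα hβ hαβ θ₀ θ hθ H hH ytil yhat hytil hyhat
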